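/- For any field K, the center of Γ is not finitely generated as a K-algebra: there is no finite subset of the center Z(Γ) that generates Z(Γ) as a K-algebra. -/

import Mathlib

set_option synthInstance.maxHeartbeats 1000000
set_option maxHeartbeats 1000000

variable (K : Type*) [Field K]

/-- Relations defining `Γ = KQ/(ab + ba, bc)` (the Koszul dual situation):
generators `e = ι 0`, `a = ι 1`, `b = ι 2`, `c = ι 3`, with the path algebra
relations for the quiver with two vertices, loops `a, b` at vertex 1 and an
arrow `c`, together with `ab + ba = 0` and `bc = 0`. -/
inductive Grel : FreeAlgebra K (Fin 4) → FreeAlgebra K (Fin 4) → Prop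
  | ee : Grel (FreeAlgebra.ι K 0 * FreeAlgebra.ι K 0) (FreeAlgebra.ι K 0)
  | ea : Grel (FreeAlgebra.ι K 0 * FreeAlgebra.ι K 1) (FreeAlgebra.ι K 1)
  | ae : Grel (FreeAlgebra.ι K 1 * FreeAlgebra.ι K 0) (FreeAlgebra.ι K 1)
  | eb : Grel (FreeAlgebra.ι K 0 * FreeAlgebra.ι K 2) (FreeAlgebra.ι K 2)
  | be : Grel (FreeAlgebra.ι K 2 * FreeAlgebra.ι K 0) (FreeAlgebra.ι K 2)
  | ec : Grel (FreeAlgebra.ι K 0 * FreeAlgebra.ι K 3) (FreeAlgebra.ι K 3)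
  | ce : Grel (FreeAlgebra.ι K 3 * FreeAlgebra.ι K 0) 0
  | abba : Grel (FreeAlgebra.ι K 1 * FreeAlgebra.ι K 2 + FreeAlgebra.ι K 2 * FreeAlgebra.ι K 1) 0
  | bc : Grel (FreeAlgebra.ι K 2 * FreeAlgebra.ι K 3) 0

/-- The algebra `Γ` (whose center computes `Z_gr(E(𝒜)) ≅ HH*(𝒜)/𝒩`). -/
abbrev Galg := RingQuot (Grel K)

noncomputable def eG : Galg K := RingQuot.mkAlgHom K (Grel K) (FreeAlgebra.ι K 0)
noncomputable def aG : Galg K := RingQuot.mkAlgHom K (Grel K) (FreeAlgebra.ι K 1)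
noncomputable def bG : Galg K := RingQuot.mkAlgHom K (Grel K) (FreeAlgebra.ι K 2)
noncomputable def cG : Galg K := RingQuot.mkAlgHom K (Grel K) (FreeAlgebra.ι K 3)

/-- The substitution `y ↦ 0` on `K[x,y]` (with `x = X 0`, `y = X 1`). -/
noncomputable def substY0 : MvPolynomial (Fin 2) K →ₐ[K] MvPolynomial (Fin 2) K :=
  MvPolynomial.aeval (fun i => if i = 0 then MvPolynomial.X 0 else 0)

/-- The subalgebra `R = { f ∈ K[x,y] : f(x,0) is a constant } = K·1 + y·K[x,y]`
of the polynomial ring `K[x,y]`. -/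
noncomputable def Rsub : Subalgebra K (MvPolynomial (Fin 2) K) :=
  Subalgebra.comap (substY0 K) ⊥

/-!
Let `Γ` act on `V = K[x,y] × K[x,y] × K`, the first two factors forming the space at vertex 1
and `K` the space at vertex 2: `a` multiplies by `x`, `b` sends `(p, q, t)` to
`(y · p(-x, y), 0, 0)` and `c` sends `t` to the constant `t` in the second factor. The maps
`v ↦ (v₁, 0, 0)`, `v ↦ (y v₁, 0, 0)` and `v ↦ (0, v₁(x, 0), 0)` commute with `Γ`; hence
a central `z` acts on the first factor as multiplication by a polynomial `φ(z)`, and `φ` is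
an algebra map from `Z(Γ)` into `R = {f | f(x, 0) ∈ K}`. If the generators of a finitely
generated subalgebra of `R` have degree at most `D`, every monomial `xⁱyʲ` of its elements
satisfies `i ≤ D j`. This fails for the images `x^(2M) y²` of the central elements
`a^(2M) b²` once `M > D`.
-/

open MvPolynomial

theorem commute_sq_of_mul_add_mul_eq_zero {R : Type*} [Ring R] {a b : R}
    (h : a * b + b * a = 0) : Commute (a ^ 2) b := by
  have key : a ^ 2 * b - b * a ^ 2 = a * (a * b + b * a) - (a * b + b * a) * a := by noncomm_ring
  rwa [h, mul_zero, zero_mul, sub_zero, sub_eq_zero] at key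

theorem RingQuot.apply_mem_adjoin_range_mkAlgHom_ι {R X A : Type*} [CommSemiring R] [Semiring A]
    [Algebra R A] {r : FreeAlgebra R X → FreeAlgebra R X → Prop} (f : RingQuot r →ₐ[R] A)
    (γ : RingQuot r) :
    f γ ∈ Algebra.adjoin R
      (Set.range fun i => f (RingQuot.mkAlgHom R r (FreeAlgebra.ι R i))) := by
  obtain ⟨y, rfl⟩ := RingQuot.mkAlgHom_surjective R r γ
  rw [Algebra.adjoin_range_eq_range_freeAlgebra_lift]
  exact ⟨y, congrArg (· y) (FreeAlgebra.lift_comp_ι (f.comp (RingQuot.mkAlgHom R r)))⟩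

theorem RingQuot.mem_center_of_commute_mkAlgHom_ι {R X : Type*} [CommSemiring R]
    {r : FreeAlgebra R X → FreeAlgebra R X → Prop} {z : RingQuot r}
    (h : ∀ i, Commute z (RingQuot.mkAlgHom R r (FreeAlgebra.ι R i))) :
    z ∈ Subalgebra.center R (RingQuot r) :=
  Subalgebra.mem_center_iff.mpr fun γ =>
    (Algebra.commute_of_mem_adjoin_of_forall_mem_commute
      (RingQuot.apply_mem_adjoin_range_mkAlgHom_ι (AlgHom.id R _) γ)
      (by rintro _ ⟨i, rfl⟩; exact h i)).eq.symm

namespace MvPolynomial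

variable {R σ : Type*} [CommSemiring R]

def exponentSubalgebra (M : AddSubmonoid (σ →₀ ℕ)) : Subalgebra R (MvPolynomial σ R) where
  carrier := {p | ∀ u ∈ p.support, u ∈ M}
  mul_mem' {p q} hp hq u hu := by
    classical
    obtain ⟨v, hv, w, hw, rfl⟩ := Finset.mem_add.mp (support_mul p q hu)
    exact M.add_mem (hp v hv) (hq w hw)
  add_mem' {p q} hp hq u hu := by
    classical
    exact (Finset.mem_union.mp (support_add hu)).elim (hp u) (hq u)
  algebraMap_mem' r u hu := by
    classical
    rw [algebraMap_eq, support_C] at hu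
    split_ifs at hu <;> simp_all [M.zero_mem]

theorem eq_map_one_mul_of_map_X_mul (f : MvPolynomial σ R →ₗ[R] MvPolynomial σ R)
    (hf : ∀ i p, f (X i * p) = X i * f p) (p : MvPolynomial σ R) : f p = f 1 * p := by
  induction p using MvPolynomial.induction_on with
  | C a => rw [C_eq_smul_one, map_smul, mul_smul_comm, mul_one]
  | add p q hp hq => rw [map_add, hp, hq, mul_add]
  | mul_X p i hp => rw [mul_comm p, hf, hp, mul_left_comm]

end MvPolynomial

def slopeCone (D : ℕ) : AddSubmonoid (Fin 2 →₀ ℕ) where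
  carrier := {u | u 0 ≤ D * u 1}
  add_mem' {u v} (hu : u 0 ≤ D * u 1) (hv : v 0 ≤ D * v 1) :=
    show u 0 + v 0 ≤ D * (u 1 + v 1) by rw [mul_add]; exact add_le_add hu hv
  zero_mem' := by simp

theorem mem_slopeCone {D : ℕ} {u : Fin 2 →₀ ℕ} : u ∈ slopeCone D ↔ u 0 ≤ D * u 1 := Iff.rfl

@[simp] theorem substY0_X_zero : substY0 K (X 0) = X 0 := by simp [substY0]
@[simp] theorem substY0_X_one : substY0 K (X 1) = 0 := by simp [substY0]

theorem substY0_monomial (d : Fin 2 →₀ ℕ) (c : K) :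
    substY0 K (monomial d c) = if d 1 = 0 then monomial d c else 0 := by
  rw [substY0, aeval_monomial, monomial_eq, Finsupp.prod_fintype _ _ (by simp),
    Finsupp.prod_fintype _ _ (by simp), Fin.prod_univ_two, Fin.prod_univ_two]
  by_cases h : d 1 = 0 <;> simp [h]

theorem coeff_substY0 {u : Fin 2 →₀ ℕ} (hu : u 1 = 0) (f : MvPolynomial (Fin 2) K) :
    coeff u (substY0 K f) = coeff u f := by
  induction f using MvPolynomial.induction_on' with
  | monomial d c =>
    rw [substY0_monomial, coeff_monomial]
    split_ifs with h₁ h₂ <;> simp_all [coeff_monomial]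
  | add p q hp hq => rw [map_add, coeff_add, coeff_add, hp, hq]

theorem eq_zero_of_mem_support_of_mem_Rsub {f : MvPolynomial (Fin 2) K} (hf : f ∈ Rsub K)
    {u : Fin 2 →₀ ℕ} (hu : u ∈ f.support) (hu1 : u 1 = 0) : u = 0 := by
  obtain ⟨r, hr⟩ := Algebra.mem_bot.mp hf
  replace hr : C r = substY0 K f := hr
  rw [mem_support_iff, ← coeff_substY0 K hu1, ← hr, coeff_C] at hu
  exact (ite_ne_right_iff.mp hu).1.symm

theorem exists_le_exponentSubalgebra_slopeCone_of_le_Rsub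
    {S : Subalgebra K (MvPolynomial (Fin 2) K)} (hS : S.FG) (hSR : S ≤ Rsub K) :
    ∃ D, S ≤ exponentSubalgebra (slopeCone D) := by
  obtain ⟨t, rfl⟩ := hS
  refine ⟨t.sup totalDegree, Algebra.adjoin_le fun f hf u hu => ?_⟩
  rw [mem_slopeCone]
  rcases Nat.eq_zero_or_pos (u 1) with hu1 | hu1
  · simp [eq_zero_of_mem_support_of_mem_Rsub K (hSR (Algebra.subset_adjoin hf)) hu hu1]
  · calc u 0 ≤ f.totalDegree := (monomial_le_degreeOf 0 hu).trans (degreeOf_le_totalDegree f 0)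
      _ ≤ t.sup totalDegree := Finset.le_sup hf
      _ ≤ t.sup totalDegree * u 1 := Nat.le_mul_of_pos_right _ hu1

theorem X_pow_mul_X_pow_notMem_slopeCone {D m n : ℕ} (h : D * n < m) :
    (X 0 ^ m * X 1 ^ n : MvPolynomial (Fin 2) K) ∉ exponentSubalgebra (slopeCone D) := by
  intro hmem
  have hu : Finsupp.single 0 m + Finsupp.single 1 n ∈
      (X 0 ^ m * X 1 ^ n : MvPolynomial (Fin 2) K).support := by
    simp [X_pow_eq_monomial, monomial_mul]
  have : m ≤ D * n := by simpa using mem_slopeCone.mp (hmem _ hu)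
  omega

theorem eG_mul_bG : eG K * bG K = bG K := by
  simpa [eG, bG] using RingQuot.mkAlgHom_rel K (Grel.eb (K := K))
theorem bG_mul_eG : bG K * eG K = bG K := by
  simpa [eG, bG] using RingQuot.mkAlgHom_rel K (Grel.be (K := K))
theorem cG_mul_eG : cG K * eG K = 0 := by
  simpa [cG, eG] using RingQuot.mkAlgHom_rel K (Grel.ce (K := K))
theorem bG_mul_cG : bG K * cG K = 0 := by
  simpa [bG, cG] using RingQuot.mkAlgHom_rel K (Grel.bc (K := K))
theorem aG_mul_bG_add_bG_mul_aG : aG K * bG K + bG K * aG K = 0 := by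
  simpa [aG, bG] using RingQuot.mkAlgHom_rel K (Grel.abba (K := K))

theorem cG_mul_bG : cG K * bG K = 0 := by
  rw [← eG_mul_bG, ← mul_assoc, cG_mul_eG, zero_mul]

noncomputable def centralElt (M : ℕ) : Galg K := aG K ^ (2 * M) * bG K ^ 2

theorem centralElt_mem_center (M : ℕ) : centralElt K M ∈ Subalgebra.center K (Galg K) := by
  have hab : Commute (aG K ^ (2 * M)) (bG K) := by
    rw [pow_mul]; exact (commute_sq_of_mul_add_mul_eq_zero (aG_mul_bG_add_bG_mul_aG K)).pow_left M
  have hba : Commute (bG K ^ 2) (aG K) :=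
    commute_sq_of_mul_add_mul_eq_zero (by rw [add_comm]; exact aG_mul_bG_add_bG_mul_aG K)
  have hswap : centralElt K M = bG K ^ 2 * aG K ^ (2 * M) := (hba.pow_right _).eq.symm
  refine RingQuot.mem_center_of_commute_mkAlgHom_ι fun i => ?_
  fin_cases i
  · change centralElt K M * eG K = eG K * centralElt K M
    calc centralElt K M * eG K = centralElt K M := by
          rw [centralElt, mul_assoc, sq, mul_assoc, bG_mul_eG]
      _ = eG K * centralElt K M := by
          rw [hswap, ← mul_assoc, sq, ← mul_assoc, eG_mul_bG]
  · exact ((Commute.refl _).pow_left _).mul_left hba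
  · exact hab.mul_left ((Commute.refl _).pow_left _)
  · change centralElt K M * cG K = cG K * centralElt K M
    calc centralElt K M * cG K = 0 := by
          rw [centralElt, mul_assoc, sq, mul_assoc, bG_mul_cG, mul_zero, mul_zero]
      _ = cG K * centralElt K M := by
          rw [hswap, ← mul_assoc, sq, ← mul_assoc, cG_mul_bG, zero_mul, zero_mul]

abbrev GammaModule := MvPolynomial (Fin 2) K × MvPolynomial (Fin 2) K × K

noncomputable def reflectX : MvPolynomial (Fin 2) K →ₐ[K] MvPolynomial (Fin 2) K :=
  aeval ![-X 0, X 1]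

@[simp] theorem reflectX_X_zero : reflectX K (X 0) = -X 0 := by simp [reflectX]
@[simp] theorem reflectX_X_one : reflectX K (X 1) = X 1 := by simp [reflectX]

@[simps] noncomputable def actE : Module.End K (GammaModule K) where
  toFun v := (v.1, v.2.1, 0)
  map_add' _ _ := by simp
  map_smul' _ _ := by simp

@[simps] noncomputable def actA : Module.End K (GammaModule K) where
  toFun v := (X 0 * v.1, X 0 * v.2.1, 0)
  map_add' _ _ := by simp [mul_add]
  map_smul' _ _ := by simp

@[simps] noncomputable def actB : Module.End K (GammaModule K) where
  toFun v := (X 1 * reflectX K v.1, 0, 0)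
  map_add' _ _ := by simp [mul_add]
  map_smul' _ _ := by simp

@[simps] noncomputable def actC : Module.End K (GammaModule K) where
  toFun v := (0, C v.2.2, 0)
  map_add' _ _ := by simp
  map_smul' _ _ := by simp [smul_eq_C_mul]

noncomputable def genAction : Fin 4 → Module.End K (GammaModule K) :=
  ![actE K, actA K, actB K, actC K]

theorem lift_genAction_eq_of_grel ⦃x y : FreeAlgebra K (Fin 4)⦄ (h : Grel K x y) :
    FreeAlgebra.lift K (genAction K) x = FreeAlgebra.lift K (genAction K) y := by
  induction h <;> refine LinearMap.ext fun v => ?_ <;> simp [genAction, mul_left_comm]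

noncomputable def rep : Galg K →ₐ[K] Module.End K (GammaModule K) :=
  RingQuot.liftAlgHom K ⟨FreeAlgebra.lift K (genAction K), lift_genAction_eq_of_grel K⟩

theorem rep_mkAlgHom_ι (i : Fin 4) :
    rep K (RingQuot.mkAlgHom K (Grel K) (FreeAlgebra.ι K i)) = genAction K i := by
  rw [rep, RingQuot.liftAlgHom_mkAlgHom_apply, FreeAlgebra.lift_ι_apply]

@[simp] theorem rep_aG : rep K (aG K) = actA K := rep_mkAlgHom_ι K 1
@[simp] theorem rep_bG : rep K (bG K) = actB K := rep_mkAlgHom_ι K 2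
@[simp] theorem rep_cG : rep K (cG K) = actC K := rep_mkAlgHom_ι K 3

theorem commute_rep_of_forall_commute {T : Module.End K (GammaModule K)}
    (hT : ∀ i, Commute (genAction K i) T) (γ : Galg K) : Commute (rep K γ) T := by
  refine (Algebra.commute_of_mem_adjoin_of_forall_mem_commute
    (RingQuot.apply_mem_adjoin_range_mkAlgHom_ι (rep K) γ) ?_).symm
  rintro _ ⟨i, rfl⟩
  exact (rep_mkAlgHom_ι K i ▸ hT i).symm

@[simps] noncomputable def projFst : Module.End K (GammaModule K) where
  toFun v := (v.1, 0, 0)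
  map_add' _ _ := by simp
  map_smul' _ _ := by simp

@[simps] noncomputable def mulYFst : Module.End K (GammaModule K) where
  toFun v := (X 1 * v.1, 0, 0)
  map_add' _ _ := by simp [mul_add]
  map_smul' _ _ := by simp

@[simps] noncomputable def substY0Fst : Module.End K (GammaModule K) where
  toFun v := (0, substY0 K v.1, 0)
  map_add' _ _ := by simp
  map_smul' _ _ := by simp

theorem commute_rep_projFst (γ : Galg K) : Commute (rep K γ) (projFst K) :=
  commute_rep_of_forall_commute K
    (fun i => by fin_cases i <;> refine LinearMap.ext fun v => ?_ <;> simp [genAction]) γ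

theorem commute_rep_mulYFst (γ : Galg K) : Commute (rep K γ) (mulYFst K) :=
  commute_rep_of_forall_commute K
    (fun i => by
      fin_cases i <;> refine LinearMap.ext fun v => ?_ <;> simp [genAction, mul_left_comm]) γ

theorem commute_rep_substY0Fst (γ : Galg K) : Commute (rep K γ) (substY0Fst K) :=
  commute_rep_of_forall_commute K
    (fun i => by fin_cases i <;> refine LinearMap.ext fun v => ?_ <;> simp [genAction]) γ

noncomputable def toPoly : Galg K →ₗ[K] MvPolynomial (Fin 2) K :=
  LinearMap.fst K _ _ ∘ₗ LinearMap.applyₗ ((1, 0, 0) : GammaModule K) ∘ₗ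
    (rep K).toLinearMap

theorem toPoly_apply (γ : Galg K) : toPoly K γ = (rep K γ (1, 0, 0)).1 := rfl

theorem rep_apply_mk_zero_zero (γ : Galg K) (p : MvPolynomial (Fin 2) K) :
    rep K γ (p, 0, 0) = ((rep K γ (p, 0, 0)).1, 0, 0) := by
  simpa using LinearMap.congr_fun (commute_rep_projFst K γ) (p, 0, 0)

theorem commute_rep_of_mem_center {z : Galg K} (hz : z ∈ Subalgebra.center K (Galg K))
    (γ : Galg K) : Commute (rep K z) (rep K γ) :=
  Commute.map (show Commute z γ from (Subalgebra.mem_center_iff.mp hz γ).symm) (rep K)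

theorem rep_apply_of_mem_center {z : Galg K} (hz : z ∈ Subalgebra.center K (Galg K))
    (p : MvPolynomial (Fin 2) K) : rep K z (p, 0, 0) = (toPoly K z * p, 0, 0) := by
  let f := LinearMap.fst K _ _ ∘ₗ rep K z ∘ₗ LinearMap.inl K _ (MvPolynomial (Fin 2) K × K)
  have hA : Commute (rep K z) (actA K) := rep_aG K ▸ commute_rep_of_mem_center K hz (aG K)
  have hf : ∀ i q, f (X i * q) = X i * f q := by
    intro i q
    fin_cases i
    · simpa [f, Prod.mk_zero_zero, Module.End.mul_apply] using congrArg Prod.fst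
        (LinearMap.congr_fun hA.eq (q, 0, 0))
    · simpa [f, Prod.mk_zero_zero, Module.End.mul_apply] using congrArg Prod.fst
        (LinearMap.congr_fun (commute_rep_mulYFst K z).eq (q, 0, 0))
  rw [rep_apply_mk_zero_zero]
  simpa [f, toPoly_apply, Prod.mk_zero_zero] using eq_map_one_mul_of_map_X_mul f hf p

theorem toPoly_mul_of_mem_center {z : Galg K} (hz : z ∈ Subalgebra.center K (Galg K))
    (γ : Galg K) : toPoly K (z * γ) = toPoly K z * toPoly K γ := by
  rw [toPoly_apply, map_mul, Module.End.mul_apply, rep_apply_mk_zero_zero,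
    rep_apply_of_mem_center K hz]
  rfl

theorem toPoly_mem_Rsub_of_mem_center {z : Galg K} (hz : z ∈ Subalgebra.center K (Galg K)) :
    toPoly K z ∈ Rsub K := by
  have hc := LinearMap.congr_fun (rep_cG K ▸ commute_rep_of_mem_center K hz (cG K)) (0, 0, 1)
  have hs := LinearMap.congr_fun (commute_rep_substY0Fst K z) (1, 0, 0)
  simp only [Module.End.mul_apply, actC_apply, substY0Fst_apply, map_one] at hc hs
  refine Algebra.mem_bot.mpr ⟨(rep K z (0, 0, 1)).2.2, ?_⟩
  simpa [toPoly_apply] using (congrArg (·.2.1) (hs.symm.trans hc)).symm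

noncomputable def centerToPoly : Subalgebra.center K (Galg K) →ₐ[K] MvPolynomial (Fin 2) K :=
  AlgHom.ofLinearMap (toPoly K ∘ₗ (Subalgebra.center K (Galg K)).val.toLinearMap)
    (by simp [toPoly_apply]) (fun x y => toPoly_mul_of_mem_center K x.2 y)

theorem range_centerToPoly_le_Rsub : (centerToPoly K).range ≤ Rsub K := by
  rintro _ ⟨z, rfl⟩
  exact toPoly_mem_Rsub_of_mem_center K z.2

theorem actA_pow_apply (n : ℕ) (p : MvPolynomial (Fin 2) K) :
    (actA K ^ n) (p, 0, 0) = (X 0 ^ n * p, 0, 0) := by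
  induction n with
  | zero => simp
  | succ n ih =>
    rw [pow_succ', Module.End.mul_apply, ih, actA_apply, pow_succ', mul_assoc, mul_zero]

theorem toPoly_centralElt (M : ℕ) : toPoly K (centralElt K M) = X 0 ^ (2 * M) * X 1 ^ 2 := by
  simp [toPoly_apply, centralElt, sq, Module.End.mul_apply, actA_pow_apply]

/-- For any field `K`, the center of `Γ` is not finitely generated as a `K`-algebra:
there is no finite subset of `Z(Γ)` generating `Z(Γ)` as a `K`-algebra. -/
theorem center_not_finiteType (K : Type*) [Field K] :
    ¬ Algebra.FiniteType K (Subalgebra.center K (Galg K)) := by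
  intro hFT
  obtain ⟨D, hD⟩ := exists_le_exponentSubalgebra_slopeCone_of_le_Rsub K
    ((Algebra.map_top (centerToPoly K)) ▸ hFT.out.map (centerToPoly K))
    (range_centerToPoly_le_Rsub K)
  refine X_pow_mul_X_pow_notMem_slopeCone K (show D * 2 < 2 * (D + 1) by omega) (hD ?_)
  exact ⟨⟨_, centralElt_mem_center K (D + 1)⟩, toPoly_centralElt K (D + 1)⟩
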